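/- arXiv:2604.00427 — 6 statements merged into one kernel-verified Lean document; each statement's English description precedes it below -/
import Mathlib

section
/- For a nonzero vector φ ∈ ℂⁿ, MPC(φ) = 1 if and only if the real vectors Re φ and Im φ are linearly dependent over ℝ; equivalently, MPC(φ) = 1 if and only if φ is a complex scalar multiple of a real vector (the mode shape is real-valued up to phase). -/
/-- Real Euclidean inner product of the real parts of a complex vector. -/
noncomputable def Sxx {n : ℕ} (φ : Fin n → ℂ) : ℝ := ∑ k, (φ k).re * (φ k).re

/-- Real Euclidean inner product of the imaginary parts of a complex vector. -/
noncomputable def Syy {n : ℕ} (φ : Fin n → ℂ) : ℝ := ∑ k, (φ k).im * (φ k).im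

/-- Real Euclidean inner product of the real and imaginary parts of a complex vector. -/
noncomputable def Sxy {n : ℕ} (φ : Fin n → ℂ) : ℝ := ∑ k, (φ k).re * (φ k).im

/-- The modal phase collinearity of a complex vector. -/
noncomputable def MPC {n : ℕ} (φ : Fin n → ℂ) : ℝ :=
  ((Sxx φ - Syy φ) ^ 2 + 4 * Sxy φ ^ 2) / (Sxx φ + Syy φ) ^ 2

/-- For a nonzero `φ ∈ ℂⁿ`, `MPC(φ) = 1` iff `Re φ` and `Im φ` are linearly dependent over `ℝ`;
equivalently, iff `φ` is a complex scalar multiple of a real vector. -/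
theorem mpc_eq_one_iff_real_mode {n : ℕ} (φ : Fin n → ℂ) (hφ : φ ≠ 0) :
    (MPC φ = 1 ↔
      ¬ LinearIndependent ℝ ![fun k => (φ k).re, fun k => (φ k).im]) ∧
    (MPC φ = 1 ↔
      ∃ (c : ℂ) (r : Fin n → ℝ), φ = fun k => c * (r k : ℂ)) := by
  set A : EuclideanSpace ℝ (Fin n) := WithLp.toLp 2 (fun k => (φ k).re) with hA
  set B : EuclideanSpace ℝ (Fin n) := WithLp.toLp 2 (fun k => (φ k).im) with hB
  have hxx : Sxx φ = inner ℝ A A := by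
    rw [PiLp.inner_apply]; simp [Sxx, RCLike.inner_apply, hA, sq]
  have hyy : Syy φ = inner ℝ B B := by
    rw [PiLp.inner_apply]; simp [Syy, RCLike.inner_apply, hB, sq]
  have hxy : Sxy φ = inner ℝ A B := by
    simp [Sxy, PiLp.inner_apply, RCLike.inner_apply, hA, hB]
    exact Finset.sum_congr rfl fun k _ => mul_comm _ _
  have hden : 0 < Sxx φ + Syy φ := by
    have heq : Sxx φ + Syy φ = ∑ k, Complex.normSq (φ k) := by
      rw [Sxx, Syy, ← Finset.sum_add_distrib]
      simp [Complex.normSq_apply]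
    rw [heq]
    obtain ⟨k, hk⟩ := Function.ne_iff.1 hφ
    exact Finset.sum_pos' (fun i _ => Complex.normSq_nonneg _)
      ⟨k, Finset.mem_univ k, Complex.normSq_pos.2 hk⟩
  have h1 : MPC φ = 1 ↔ Sxy φ ^ 2 = Sxx φ * Syy φ := by
    rw [MPC, div_eq_one_iff_eq (pow_ne_zero 2 hden.ne')]
    constructor <;> intro h <;> nlinarith
  -- Cauchy–Schwarz equality case
  have h2 : Sxy φ ^ 2 = Sxx φ * Syy φ ↔ (A = 0 ∨ ∃ r : ℝ, B = r • A) := by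
    have key := (@norm_inner_eq_norm_tfae ℝ (EuclideanSpace ℝ (Fin n)) _ _ _ A B).out 0 2
    rw [← key]
    rw [hxx, hyy, hxy, Real.norm_eq_abs]
    constructor
    · intro h
      have hnn : (0:ℝ) ≤ ‖A‖ * ‖B‖ := by positivity
      have : (inner ℝ A B : ℝ) ^ 2 = (‖A‖ * ‖B‖) ^ 2 := by
        rw [h, real_inner_self_eq_norm_sq, real_inner_self_eq_norm_sq]; ring
      calc |(inner ℝ A B : ℝ)| = Real.sqrt ((inner ℝ A B : ℝ) ^ 2) := (Real.sqrt_sq_eq_abs _).symm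
        _ = Real.sqrt ((‖A‖ * ‖B‖) ^ 2) := by rw [this]
        _ = ‖A‖ * ‖B‖ := Real.sqrt_sq hnn
    · intro h
      have : (inner ℝ A B : ℝ) ^ 2 = (‖A‖ * ‖B‖) ^ 2 := by
        rw [← sq_abs, h]
      rw [real_inner_self_eq_norm_sq, real_inner_self_eq_norm_sq] at *
      nlinarith [this]
  have h3 : (A = 0 ∨ ∃ r : ℝ, B = r • A) ↔
      ¬ LinearIndependent ℝ ![fun k => (φ k).re, fun k => (φ k).im] := by
    constructor
    · rintro (h | ⟨r, h⟩) hli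
      · rw [LinearIndependent.pair_iff] at hli
        have := (hli 1 0 (by
          have : (fun k => (φ k).re) = (0 : Fin n → ℝ) := by
            funext k; exact congrArg (fun v => v k) h
          simp [this])).1
        exact one_ne_zero this
      · rw [LinearIndependent.pair_iff] at hli
        have hb : ∀ k, (φ k).im = r * (φ k).re := fun k => congrArg (fun v => v k) h
        have := (hli r (-1) (by
          funext k
          simp [hb k])).2
        norm_num at this
    · intro hli
      by_contra hcon
      push_neg at hcon
      obtain ⟨hA0, hAB⟩ := hcon
      apply hli
      rw [LinearIndependent.pair_iff]
      intro s t hst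
      have hst' : ∀ k, s * (φ k).re + t * (φ k).im = 0 := by
        intro k
        have := congrFun hst k
        simpa using this
      by_cases ht : t = 0
      · subst ht
        have hs : s = 0 := by
          by_contra hs
          apply hA0
          ext k
          have := hst' k
          simp at this
          rcases this with h | h
          · exact absurd h hs
          · exact h
        exact ⟨hs, rfl⟩
      · exfalso
        apply hAB (-s/t)
        ext k
        have := hst' k
        show (φ k).im = (-s/t) * (φ k).re
        field_simp
        linarith [hst' k]
  have h4 : (A = 0 ∨ ∃ r : ℝ, B = r • A) ↔
      ∃ (c : ℂ) (r : Fin n → ℝ), φ = fun k => c * (r k : ℂ) := by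
    constructor
    · rintro (h | ⟨r, h⟩)
      · refine ⟨Complex.I, fun k => (φ k).im, ?_⟩
        funext k
        have hre : (φ k).re = 0 := congrArg (fun v => v k) h
        apply Complex.ext <;> simp [hre]
      · refine ⟨1 + r * Complex.I, fun k => (φ k).re, ?_⟩
        funext k
        have him : (φ k).im = r * (φ k).re := congrArg (fun v => v k) h
        apply Complex.ext <;> simp [him]
    · rintro ⟨c, r, rfl⟩
      by_cases hcre : c.re = 0
      · left
        ext k
        show ((c * (r k : ℂ))).re = 0
        simp [hcre]
      · right
        refine ⟨c.im / c.re, ?_⟩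
        ext k
        show (c * (r k : ℂ)).im = (c.im / c.re) * (c * (r k : ℂ)).re
        simp
        field_simp
  exact ⟨h1.trans (h2.trans h3), h1.trans (h2.trans h4)⟩
end

section
/- Let λ1 > 0, λ2 > 0 and β ≥ 0 be real. Then every complex root s of the characteristic equation (s² + λ1·s + 1 + β)(s² + λ2·s + 1 + β) = β² has strictly negative real part; i.e., the two-DOF damped coupled-oscillator system is asymptotically stable. -/
lemma quad_root_re_neg (a b c : ℝ) (s : ℂ) (ha : 0 < a) (hb : 0 < b) (hc : 0 < c)
    (h : (a : ℂ) * s ^ 2 + (b : ℂ) * s + (c : ℂ) = 0) : s.re < 0 := by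
  have hre := congrArg Complex.re h
  have him := congrArg Complex.im h
  simp [Complex.add_re, Complex.add_im, Complex.mul_re, Complex.mul_im, pow_two] at hre him
  by_contra hx
  push_neg at hx
  rcases eq_or_ne s.im 0 with hy | hy
  · rw [hy] at hre
    nlinarith [mul_nonneg (mul_nonneg ha.le hx) hx, mul_nonneg hb.le hx]
  · have hy2 : 0 < s.im ^ 2 := by positivity
    have h3 : (a * (s.re * s.im + s.im * s.re) + b * s.im) * s.im = 0 := by rw [him]; ring
    nlinarith [mul_pos hb hy2, mul_nonneg (mul_nonneg ha.le hx) hy2.le]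

/-- Asymptotic stability of the two-DOF damped coupled-oscillator system: for `λ1, λ2 > 0` and
`β ≥ 0`, every complex root of the characteristic equation
`(s² + λ1 s + 1 + β)(s² + λ2 s + 1 + β) = β²` has strictly negative real part. -/
theorem two_dof_asymptotically_stable (lam1 lam2 β : ℝ)
    (h1 : 0 < lam1) (h2 : 0 < lam2) (hβ : 0 ≤ β) :
    ∀ s : ℂ,
      (s ^ 2 + (lam1 : ℂ) * s + 1 + (β : ℂ)) * (s ^ 2 + (lam2 : ℂ) * s + 1 + (β : ℂ))
        = (β : ℂ) ^ 2 → s.re < 0 := by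
  intro s hs
  rcases eq_or_lt_of_le hβ with hβ0 | hβ0
  · -- β = 0 : the product is zero, so one quadratic factor vanishes
    subst hβ0
    simp only [Complex.ofReal_zero, ne_eq, OfNat.ofNat_ne_zero, not_false_eq_true,
      zero_pow, add_zero] at hs
    rcases mul_eq_zero.mp hs with h | h
    · exact quad_root_re_neg 1 lam1 1 s one_pos h1 one_pos (by push_cast; linear_combination h)
    · exact quad_root_re_neg 1 lam2 1 s one_pos h2 one_pos (by push_cast; linear_combination h)
  · -- β > 0 : energy argument with eigenvector (β, z), z = s² + λ₁ s + 1 + β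
    set z : ℂ := s ^ 2 + (lam1 : ℂ) * s + 1 + (β : ℂ) with hzdef
    set N : ℝ := Complex.normSq z with hNdef
    have hcz : (starRingEnd ℂ) z * z = (N : ℂ) := by
      rw [mul_comm]; exact Complex.mul_conj z
    have hkey : ((β : ℂ) ^ 2) * z + (N : ℂ) * (s ^ 2 + (lam2 : ℂ) * s + 1 + (β : ℂ))
        - 2 * (β : ℂ) ^ 2 * (z.re : ℂ) = 0 := by
      have h1' : (N : ℂ) * (s ^ 2 + (lam2 : ℂ) * s + 1 + (β : ℂ))
          = (starRingEnd ℂ) z * (β : ℂ) ^ 2 := by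
        rw [← hcz, mul_assoc, hs]
      rw [h1']
      have hac : z + (starRingEnd ℂ) z = 2 * (z.re : ℂ) := by rw [Complex.add_conj]; push_cast; ring
      linear_combination (β : ℂ) ^ 2 * hac
    set A : ℝ := β ^ 2 + N with hAdef
    set B : ℝ := lam1 * β ^ 2 + lam2 * N with hBdef
    set C : ℝ := (1 + β) * (β ^ 2 + N) - 2 * β ^ 2 * z.re with hCdef
    have hN0 : 0 ≤ N := Complex.normSq_nonneg z
    have hA : 0 < A := by positivity
    have hB : 0 < B := by positivity
    have hC : 0 < C := by
      have hM : Complex.normSq ((β : ℂ) - z) = (β - z.re) ^ 2 + z.im ^ 2 := by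
        simp [Complex.normSq_apply, Complex.sub_re, Complex.sub_im]; ring
      have hNr : N = z.re ^ 2 + z.im ^ 2 := by
        rw [hNdef, Complex.normSq_apply]; ring
      have hM0 : 0 ≤ Complex.normSq ((β : ℂ) - z) := Complex.normSq_nonneg _
      rw [hCdef]
      nlinarith [mul_nonneg hβ hM0]
    refine quad_root_re_neg A B C s hA hB hC ?_
    push_cast [hAdef, hBdef, hCdef]
    linear_combination hkey + ((β : ℂ) ^ 2 + (N : ℂ)) * hzdef - (β:ℂ)^2 * hzdef
end

section
/- Let λ1, λ2 be real with λ2 ≥ λ1 and let β > (λ2 − λ1)/2 (i.e., γ = 4β/(λ2 − λ1) > 2). Then the slow-flow matrix A = [[−λ1/2, iβ/2], [iβ/2, −λ2/2]] has two non-real eigenvalues μ₁,₂ = −(λ1+λ2)/4 ± (i/2)·√(β² − ((λ2−λ1)/2)²), which have equal real parts −(λ1+λ2)/4 and distinct imaginary parts ±(1/2)·√(β² − ((λ2−λ1)/2)²); hence in this regime the impulsive responses have a single dissipation rate and two distinct closely spaced frequencies, producing beat phenomena with slow beat frequency ω_d = (1/2)·√(β² − ((λ2−λ1)/2)²). -/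
/-- For `λ2 ≥ λ1` and `β > (λ2 − λ1)/2` (i.e. `γ > 2`), the slow-flow matrix has two non-real
eigenvalues `−(λ1+λ2)/4 ± i ω_d` with equal real parts and distinct imaginary parts `±ω_d`,
where `ω_d = (1/2)·√(β² − ((λ2−λ1)/2)²)` is the slow beat frequency: a single dissipation rate
and two distinct closely spaced frequencies. -/
theorem slow_flow_eigenvalues_gamma_gt_two (lam1 lam2 β : ℝ)
    (h12 : lam1 ≤ lam2) (hβ : (lam2 - lam1) / 2 < β) :
    let A : Matrix (Fin 2) (Fin 2) ℂ :=
      !![-(lam1 : ℂ) / 2, Complex.I * (β : ℂ) / 2;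
         Complex.I * (β : ℂ) / 2, -(lam2 : ℂ) / 2]
    let ωd : ℝ := (1 / 2) * Real.sqrt (β ^ 2 - ((lam2 - lam1) / 2) ^ 2)
    let μ1 : ℂ := (-(lam1 + lam2) / 4 : ℝ) + Complex.I * (ωd : ℂ)
    let μ2 : ℂ := (-(lam1 + lam2) / 4 : ℝ) - Complex.I * (ωd : ℂ)
    spectrum ℂ A = {μ1, μ2} ∧
    μ1.im ≠ 0 ∧ μ2.im ≠ 0 ∧
    μ1.re = -(lam1 + lam2) / 4 ∧ μ2.re = -(lam1 + lam2) / 4 ∧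
    μ1.im = ωd ∧ μ2.im = -ωd ∧ μ1.im ≠ μ2.im := by
  intro A ωd μ1 μ2
  have hd2 : (0:ℝ) ≤ (lam2 - lam1) / 2 := by linarith
  have hpos : 0 < β ^ 2 - ((lam2 - lam1) / 2) ^ 2 := by nlinarith
  have hωpos : 0 < ωd := by
    have := Real.sqrt_pos.mpr hpos
    simp only [ωd]; positivity
  have hω2 : ωd ^ 2 = (β ^ 2 - ((lam2 - lam1) / 2) ^ 2) / 4 := by
    simp only [ωd, mul_pow, Real.sq_sqrt hpos.le]; ring
  have him1 : μ1.im = ωd := by simp [μ1]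
  have him2 : μ2.im = -ωd := by simp [μ2]
  have hre1 : μ1.re = -(lam1 + lam2) / 4 := by simp [μ1]
  have hre2 : μ2.re = -(lam1 + lam2) / 4 := by simp [μ2]
  refine ⟨?_, by simp [him1, hωpos.ne'], by simp [him2, hωpos.ne'], hre1, hre2, him1, him2,
    by rw [him1, him2]; intro h; exact hωpos.ne' (by linarith)⟩
  ext z
  have hmem : z ∈ spectrum ℂ A ↔ (z • (1 : Matrix (Fin 2) (Fin 2) ℂ) - A).det = 0 := by
    rw [spectrum.mem_iff, Matrix.isUnit_iff_isUnit_det, isUnit_iff_ne_zero, not_ne_iff,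
      Algebra.algebraMap_eq_smul_one]
  have hdet : (z • (1 : Matrix (Fin 2) (Fin 2) ℂ) - A).det = (z - μ1) * (z - μ2) := by
    have h1 : (z • (1 : Matrix (Fin 2) (Fin 2) ℂ) - A) =
        !![z + (lam1 : ℂ) / 2, -(Complex.I * (β : ℂ) / 2);
           -(Complex.I * (β : ℂ) / 2), z + (lam2 : ℂ) / 2] := by
      simp only [A]
      ext i j
      fin_cases i <;> fin_cases j <;>
        simp [Matrix.one_apply] <;> ring
    rw [h1, Matrix.det_fin_two_of]
    have hω2' : (ωd : ℂ) ^ 2 = ((β : ℂ) ^ 2 - (((lam2 : ℂ) - (lam1 : ℂ)) / 2) ^ 2) / 4 := by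
      rw [show ((ωd : ℂ)) ^ 2 = ((ωd ^ 2 : ℝ) : ℂ) by push_cast; ring, hω2]
      push_cast
      ring
    simp only [μ1, μ2]
    push_cast
    linear_combination Complex.I ^ 2 * hω2' -
      ((((lam2 : ℂ) - (lam1 : ℂ)) / 2) ^ 2 / 4) * Complex.I_sq
  rw [hmem, hdet]
  simp only [mul_eq_zero, sub_eq_zero, Set.mem_insert_iff, Set.mem_singleton_iff]
end

section
/- The vector φ = (−i, 1) ∈ ℂ² satisfies MPC(φ) = 0. Consequently, at the critical parameter value γ = 2 (β = (λ2 − λ1)/2, 0 < λ1 < λ2), the eigenvectors of the slow-flow matrix A = [[−λ1/2, iβ/2], [iβ/2, −λ2/2]], all of which are complex scalar multiples of (−i, 1), have modal phase collinearity equal to 0; i.e., the vibration mode is maximally complex at γ = 2. -/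
lemma mpc_of_prop (v : Fin 2 → ℂ) (h0 : v 0 = -Complex.I * v 1) : MPC v = 0 := by
  have hre : (v 0).re = (v 1).im := by rw [h0]; simp
  have him : (v 0).im = -(v 1).re := by rw [h0]; simp
  simp only [MPC, Sxx, Syy, Sxy, Fin.sum_univ_two, hre, him]
  have hn : ((v 1).im * (v 1).im + (v 1).re * (v 1).re -
      (-(v 1).re * -(v 1).re + (v 1).im * (v 1).im)) ^ 2 +
      4 * ((v 1).im * -(v 1).re + (v 1).re * (v 1).im) ^ 2 = 0 := by ring
  rw [hn, zero_div]

/-- The vector `φ = (−i, 1) ∈ ℂ²` satisfies `MPC(φ) = 0`; consequently, at the critical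
parameter value `γ = 2` (`β = (λ2 − λ1)/2`, `0 < λ1 < λ2`) every eigenvector of the slow-flow
matrix `A` has modal phase collinearity `0`, i.e. the vibration mode is maximally complex. -/
theorem mpc_zero_at_critical_gamma (lam1 lam2 β : ℝ)
    (h1 : 0 < lam1) (h12 : lam1 < lam2) (hβ : β = (lam2 - lam1) / 2) :
    MPC ![-Complex.I, 1] = 0 ∧
    (∀ (μ : ℂ) (v : Fin 2 → ℂ), v ≠ 0 →
      (!![-(lam1 : ℂ) / 2, Complex.I * (β : ℂ) / 2;
          Complex.I * (β : ℂ) / 2, -(lam2 : ℂ) / 2]).mulVec v = μ • v →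
      MPC v = 0) := by
  have hβpos : 0 < β := by rw [hβ]; linarith
  have hβC : ((β : ℂ)) ≠ 0 := by exact_mod_cast hβpos.ne'
  have hIβ : Complex.I * (β : ℂ) ≠ 0 := mul_ne_zero Complex.I_ne_zero hβC
  constructor
  · apply mpc_of_prop
    simp
  · intro μ v hv hA
    have E0 := congrFun hA 0
    have E1 := congrFun hA 1
    simp [Matrix.mulVec, dotProduct, Fin.sum_univ_two, Matrix.cons_val_zero,
      Matrix.cons_val_one] at E0 E1
    -- v 1 ≠ 0
    have hv1 : v 1 ≠ 0 := by
      intro h1'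
      have hv0 : v 0 = 0 := by
        have : Complex.I * (β : ℂ) * v 0 = 0 := by
          have := E1
          rw [h1'] at this
          linear_combination 2 * this
        exact (mul_eq_zero.mp this).resolve_left hIβ
      apply hv
      funext i
      fin_cases i <;> simp [hv0, h1']
    -- eigenvalue: (μ + l1/2)(μ + l2/2) = -β²/4, forces μ = -(l1+l2)/4
    have hv0ne : v 0 ≠ 0 := by
      intro h0'
      have : Complex.I * (β : ℂ) * v 1 = 0 := by
        rw [h0'] at E0
        linear_combination 2 * E0
      exact hv1 ((mul_eq_zero.mp this).resolve_left hIβ)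
    have hprod : (μ + (lam1 : ℂ)/2) * (μ + (lam2 : ℂ)/2) * (v 0 * v 1) =
        -((β : ℂ))^2/4 * (v 0 * v 1) := by
      have i2 : Complex.I ^ 2 = -1 := Complex.I_sq
      linear_combination (-(μ + (lam2 : ℂ)/2) * v 1) * E0 - (Complex.I * (β:ℂ)/2 * v 1) * E1
        + ((β:ℂ)^2/4 * v 0 * v 1) * i2
    have hμeq : (μ + (lam1 : ℂ)/2) * (μ + (lam2 : ℂ)/2) = -((β : ℂ))^2/4 :=
      mul_right_cancel₀ (mul_ne_zero hv0ne hv1) hprod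
    have hβc : (β : ℂ) = ((lam2 : ℂ) - lam1) / 2 := by
      rw [hβ]; push_cast; ring
    have hsq : (μ + ((lam1 : ℂ) + lam2)/4) ^ 2 = 0 := by
      rw [hβc] at hμeq
      linear_combination hμeq
    have hμ : μ = -((lam1 : ℂ) + lam2)/4 := by
      have := pow_eq_zero_iff (n := 2) (by norm_num) |>.mp hsq
      linear_combination this
    -- from E1: I β v0 = β v1, hence v0 = -I v1
    apply mpc_of_prop
    apply mul_left_cancel₀ hIβ
    rw [hβc]
    rw [hμ, hβc] at E1
    have i2 : Complex.I ^ 2 = -1 := Complex.I_sq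
    linear_combination 2 * E1 + (((lam2:ℂ) - lam1)/2 * v 1) * i2
end

section
/- Both eigenvalues of the slow-flow matrix A = [[−λ1/2, iβ/2], [iβ/2, −λ2/2]] have strictly negative real part whenever λ1 > 0, λ2 > 0 and β is real; i.e., the slow modal dynamics of the damped two-DOF system are always decaying, for every strength of the coupling. -/
/-- For `λ1, λ2 > 0` and any real coupling `β`, both eigenvalues of the slow-flow matrix
`A = [[−λ1/2, iβ/2], [iβ/2, −λ2/2]]` have strictly negative real part: the slow modal dynamics
always decay, for every strength of the coupling. -/
theorem slow_flow_always_decaying (lam1 lam2 β : ℝ) (h1 : 0 < lam1) (h2 : 0 < lam2) :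
    ∀ μ ∈ spectrum ℂ
        (!![-(lam1 : ℂ) / 2, Complex.I * (β : ℂ) / 2;
            Complex.I * (β : ℂ) / 2, -(lam2 : ℂ) / 2]),
      μ.re < 0 := by
  intro μ hμ
  rw [spectrum.mem_iff] at hμ
  have hdet : ((algebraMap ℂ (Matrix (Fin 2) (Fin 2) ℂ)) μ -
      !![-(lam1 : ℂ) / 2, Complex.I * (β : ℂ) / 2;
          Complex.I * (β : ℂ) / 2, -(lam2 : ℂ) / 2]).det = 0 := by
    by_contra h
    exact hμ ((Matrix.isUnit_iff_isUnit_det _).2 (isUnit_iff_ne_zero.2 h))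
  have heq : (μ + lam1 / 2) * (μ + lam2 / 2) + (β : ℂ)^2 / 4 = 0 := by
    have : ((algebraMap ℂ (Matrix (Fin 2) (Fin 2) ℂ)) μ -
      !![-(lam1 : ℂ) / 2, Complex.I * (β : ℂ) / 2;
          Complex.I * (β : ℂ) / 2, -(lam2 : ℂ) / 2]) =
      !![μ + lam1 / 2, -(Complex.I * β / 2);
         -(Complex.I * β / 2), μ + lam2 / 2] := by
      ext i j
      fin_cases i <;> fin_cases j <;>
        simp [Matrix.algebraMap_matrix_apply] <;> ring
    rw [this, Matrix.det_fin_two_of] at hdet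
    have hI : Complex.I ^ 2 = -1 := Complex.I_sq
    linear_combination hdet + (β:ℂ)^2/4 * hI
  set x := μ.re
  set y := μ.im
  have hre := congrArg Complex.re heq
  have him := congrArg Complex.im heq
  simp [Complex.add_re, Complex.add_im, Complex.mul_re, Complex.mul_im,
    Complex.div_ofNat_re, Complex.div_ofNat_im, Complex.ofReal_re, Complex.ofReal_im, ← Complex.ofReal_pow,
    x, y] at hre him
  by_contra hx
  push_neg at hx
  have h3 : μ.im * (2 * μ.re + lam1 / 2 + lam2 / 2) = 0 := by linear_combination him
  have hy : μ.im = 0 := by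
    rcases mul_eq_zero.1 h3 with h | h
    · exact h
    · exfalso; nlinarith
  rw [hy] at hre
  nlinarith [sq_nonneg β]
end

section
/- Fundamental time-bandwidth limit for single-DOF LTI resonators: let σ > 0, let v(t) = e^{−σt} for t ≥ 0, let Δt = √2 · √( (∫₀^∞ t²·v(t)⁴ dt)/(∫₀^∞ v(t)⁴ dt) ) and let Δω = 2 · √( (∫₀^∞ ω²·|V(ω)|⁴ dω)/(∫₀^∞ |V(ω)|⁴ dω) ) where V(ω) = ∫₀^∞ v(t)·e^{−iωt} dt. Then the time-bandwidth product satisfies Δt · Δω = 1, independently of σ. -/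
open MeasureTheory Set Real Filter Topology

lemma V_val (σ ω : ℝ) (hσ : 0 < σ) :
    (∫ t in Set.Ioi (0 : ℝ), ((Real.exp (-σ * t) : ℝ) : ℂ) *
        Complex.exp (-Complex.I * (ω : ℂ) * (t : ℂ)))
      = ((σ : ℂ) + Complex.I * ω)⁻¹ := by
  set c : ℂ := (σ : ℂ) + Complex.I * ω with hc
  have hcre : c.re = σ := by simp [hc]
  have hc0 : c ≠ 0 := fun h => hσ.ne' (by rw [← hcre, h, Complex.zero_re])
  have key : ∀ t : ℝ, ((Real.exp (-σ * t) : ℝ) : ℂ) *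
      Complex.exp (-Complex.I * (ω : ℂ) * (t : ℂ)) = Complex.exp (-c * t) := by
    intro t
    rw [Complex.ofReal_exp, ← Complex.exp_add]
    congr 1
    simp only [hc]
    push_cast
    ring
  have hnorm : ∀ t : ℝ, ‖Complex.exp (-c * t)‖ = Real.exp (-σ * t) := by
    intro t
    rw [Complex.norm_exp]
    congr 1
    simp [hc]
  have hderiv : ∀ x ∈ Ici (0:ℝ),
      HasDerivAt (fun t : ℝ => -(Complex.exp (-c * t) / c)) (Complex.exp (-c * x)) x := by
    intro x _
    have h1 : HasDerivAt (fun z : ℂ => -(Complex.exp (-c * z) / c))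
        (-(Complex.exp (-c * x) * -c / c)) (x : ℂ) := by
      have := (((hasDerivAt_id (x : ℂ)).const_mul (-c)).cexp.div_const c).neg
      simpa [Pi.neg_def] using this
    have := h1.comp_ofReal
    convert this using 1
    field_simp
  have hint : IntegrableOn (fun t : ℝ => Complex.exp (-c * t)) (Ioi (0:ℝ)) := by
    apply Integrable.mono' (exp_neg_integrableOn_Ioi 0 hσ)
    · exact (Complex.continuous_exp.comp (by continuity)).aestronglyMeasurable
    · filter_upwards with t
      exact (hnorm t).le
  have hlim : Tendsto (fun t : ℝ => -(Complex.exp (-c * t) / c)) atTop (𝓝 0) := by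
    rw [tendsto_zero_iff_norm_tendsto_zero]
    have hexp : Tendsto (fun t : ℝ => Real.exp (-σ * t)) atTop (𝓝 0) := by
      have h1 : Tendsto (fun t : ℝ => -σ * t) atTop atBot :=
        Tendsto.const_mul_atTop_of_neg (neg_neg_iff_pos.mpr hσ)
          (tendsto_id : Tendsto (fun t : ℝ => t) atTop atTop)
      exact Real.tendsto_exp_atBot.comp h1
    have : Tendsto (fun t : ℝ => Real.exp (-σ * t) / ‖c‖) atTop (𝓝 (0 / ‖c‖)) :=
      hexp.div_const _
    rw [zero_div] at this
    refine this.congr fun t => ?_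
    rw [norm_neg, norm_div, hnorm t]
  have := integral_Ioi_of_hasDerivAt_of_tendsto' hderiv hint hlim
  rw [show (∫ t in Set.Ioi (0 : ℝ), ((Real.exp (-σ * t) : ℝ) : ℂ) *
      Complex.exp (-Complex.I * (ω : ℂ) * (t : ℂ)))
      = ∫ t in Set.Ioi (0 : ℝ), Complex.exp (-c * t) from
    setIntegral_congr_fun measurableSet_Ioi fun t _ => key t]
  rw [this]
  simp only [Complex.ofReal_zero, mul_zero, Complex.exp_zero, zero_sub, neg_neg, one_div]

lemma V_abs_pow (σ ω : ℝ) (hσ : 0 < σ) :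
    ‖((σ : ℂ) + Complex.I * ω)⁻¹‖ ^ 4 = ((σ ^ 2 + ω ^ 2) ^ 2)⁻¹ := by
  rw [norm_inv]
  have h2 : ‖(σ : ℂ) + Complex.I * ω‖ ^ 2 = σ ^ 2 + ω ^ 2 := by
    rw [Complex.sq_norm, Complex.normSq_apply]
    simp
    ring
  rw [inv_pow, show (4 : ℕ) = 2 * 2 from rfl, pow_mul, h2]

lemma intA (σ : ℝ) (hσ : 0 < σ) :
    ∫ ω in Ioi (0:ℝ), ((σ ^ 2 + ω ^ 2) ^ 2)⁻¹ = π / (4 * σ ^ 3) := by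
  set F : ℝ → ℝ := fun ω => ω / (2 * σ ^ 2 * (σ ^ 2 + ω ^ 2)) + arctan (ω / σ) / (2 * σ ^ 3)
    with hF
  have hσ2 : ∀ x : ℝ, (0:ℝ) < σ ^ 2 + x ^ 2 := fun x => by positivity
  have hderiv : ∀ x ∈ Ici (0:ℝ), HasDerivAt F (((σ ^ 2 + x ^ 2) ^ 2)⁻¹) x := by
    intro x _
    have hd1 : HasDerivAt (fun ω : ℝ => 2 * σ ^ 2 * (σ ^ 2 + ω ^ 2))
        (2 * σ ^ 2 * (2 * x)) x := by
      have := ((hasDerivAt_pow 2 x).const_add (σ ^ 2)).const_mul (2 * σ ^ 2)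
      simpa using this
    have h1 : HasDerivAt (fun ω : ℝ => ω / (2 * σ ^ 2 * (σ ^ 2 + ω ^ 2)))
        ((1 * (2 * σ ^ 2 * (σ ^ 2 + x ^ 2)) - x * (2 * σ ^ 2 * (2 * x))) /
          (2 * σ ^ 2 * (σ ^ 2 + x ^ 2)) ^ 2) x :=
      (hasDerivAt_id x).div hd1 (by positivity)
    have h2 : HasDerivAt (fun ω : ℝ => arctan (ω / σ) / (2 * σ ^ 3))
        ((1 / (1 + (x / σ) ^ 2) * (1 / σ)) / (2 * σ ^ 3)) x := by
      have hin : HasDerivAt (fun ω : ℝ => ω / σ) (1 / σ) x := by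
        simpa using (hasDerivAt_id x).div_const σ
      exact ((Real.hasDerivAt_arctan (x / σ)).comp x hin).div_const _
    have := h1.add h2
    convert this using 1
    · rfl
    · rfl
    · rfl
    have h1σ : (1 : ℝ) + (x / σ) ^ 2 ≠ 0 := by positivity
    field_simp
    ring
  have hlim : Tendsto F atTop (𝓝 (π / (4 * σ ^ 3))) := by
    have t1 : Tendsto (fun ω : ℝ => ω / (2 * σ ^ 2 * (σ ^ 2 + ω ^ 2))) atTop (𝓝 0) := by
      apply squeeze_zero' (g := fun ω : ℝ => (2 * σ ^ 2 * ω)⁻¹)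
      · filter_upwards [eventually_gt_atTop (0:ℝ)] with ω hω
        positivity
      · filter_upwards [eventually_gt_atTop (0:ℝ)] with ω hω
        rw [inv_eq_one_div, div_le_div_iff₀ (by positivity) (by positivity)]
        nlinarith [sq_nonneg σ, sq_nonneg (σ ^ 2), sq_nonneg ω]
      · exact tendsto_inv_atTop_zero.comp (Tendsto.const_mul_atTop (by positivity) tendsto_id)
    have t2 : Tendsto (fun ω : ℝ => arctan (ω / σ) / (2 * σ ^ 3)) atTop
        (𝓝 ((π / 2) / (2 * σ ^ 3))) := by
      have harg : Tendsto (fun ω : ℝ => ω / σ) atTop atTop :=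
        tendsto_id.atTop_div_const hσ
      exact (((tendsto_arctan_atTop.mono_right nhdsWithin_le_nhds).comp harg).div_const _)
    have := t1.add t2
    rw [zero_add] at this
    convert this using 2
    ring
  have := integral_Ioi_of_hasDerivAt_of_nonneg' hderiv
    (fun x _ => by positivity) hlim
  rw [this, hF]
  simp

lemma intB (σ : ℝ) (hσ : 0 < σ) :
    ∫ ω in Ioi (0:ℝ), ω ^ 2 * ((σ ^ 2 + ω ^ 2) ^ 2)⁻¹ = π / (4 * σ) := by
  set F : ℝ → ℝ := fun ω => arctan (ω / σ) / (2 * σ) - ω / (2 * (σ ^ 2 + ω ^ 2)) with hF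
  have hσ2 : ∀ x : ℝ, (0:ℝ) < σ ^ 2 + x ^ 2 := fun x => by positivity
  have hderiv : ∀ x ∈ Ici (0:ℝ), HasDerivAt F (x ^ 2 * ((σ ^ 2 + x ^ 2) ^ 2)⁻¹) x := by
    intro x _
    have hd1 : HasDerivAt (fun ω : ℝ => 2 * (σ ^ 2 + ω ^ 2)) (2 * (2 * x)) x := by
      have := ((hasDerivAt_pow 2 x).const_add (σ ^ 2)).const_mul 2
      simpa using this
    have h1 : HasDerivAt (fun ω : ℝ => ω / (2 * (σ ^ 2 + ω ^ 2)))
        ((1 * (2 * (σ ^ 2 + x ^ 2)) - x * (2 * (2 * x))) / (2 * (σ ^ 2 + x ^ 2)) ^ 2) x :=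
      (hasDerivAt_id x).div hd1 (by positivity)
    have h2 : HasDerivAt (fun ω : ℝ => arctan (ω / σ) / (2 * σ))
        ((1 / (1 + (x / σ) ^ 2) * (1 / σ)) / (2 * σ)) x := by
      have hin : HasDerivAt (fun ω : ℝ => ω / σ) (1 / σ) x := by
        simpa using (hasDerivAt_id x).div_const σ
      exact ((Real.hasDerivAt_arctan (x / σ)).comp x hin).div_const _
    have := h2.sub h1
    convert this using 1
    · rfl
    · rfl
    · rfl
    have h1σ : (1 : ℝ) + (x / σ) ^ 2 ≠ 0 := by positivity
    field_simp
    ring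
  have hlim : Tendsto F atTop (𝓝 (π / (4 * σ))) := by
    have t1 : Tendsto (fun ω : ℝ => ω / (2 * (σ ^ 2 + ω ^ 2))) atTop (𝓝 0) := by
      apply squeeze_zero' (g := fun ω : ℝ => (2 * ω)⁻¹)
      · filter_upwards [eventually_gt_atTop (0:ℝ)] with ω hω
        positivity
      · filter_upwards [eventually_gt_atTop (0:ℝ)] with ω hω
        rw [inv_eq_one_div, div_le_div_iff₀ (by positivity) (by positivity)]
        nlinarith [sq_nonneg σ]
      · exact tendsto_inv_atTop_zero.comp (Tendsto.const_mul_atTop (by positivity) tendsto_id)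
    have t2 : Tendsto (fun ω : ℝ => arctan (ω / σ) / (2 * σ)) atTop
        (𝓝 ((π / 2) / (2 * σ))) := by
      have harg : Tendsto (fun ω : ℝ => ω / σ) atTop atTop :=
        tendsto_id.atTop_div_const hσ
      exact (((tendsto_arctan_atTop.mono_right nhdsWithin_le_nhds).comp harg).div_const _)
    have := t2.sub t1
    rw [sub_zero] at this
    convert this using 2
    ring
  have := integral_Ioi_of_hasDerivAt_of_nonneg' hderiv
    (fun x _ => by positivity) hlim
  rw [this, hF]
  simp

lemma intT0 (σ : ℝ) (hσ : 0 < σ) :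
    ∫ t in Ioi (0:ℝ), Real.exp (-σ * t) ^ 4 = 1 / (4 * σ) := by
  have h := Real.integral_rpow_mul_exp_neg_mul_Ioi (a := 1) (r := 4 * σ)
    one_pos (by positivity)
  simp only [sub_self, Real.rpow_zero, one_mul] at h
  rw [show (∫ t in Ioi (0:ℝ), Real.exp (-σ * t) ^ 4)
      = ∫ t in Ioi (0:ℝ), Real.exp (-(4 * σ * t)) from
    setIntegral_congr_fun measurableSet_Ioi fun t _ => by
      rw [← Real.exp_nat_mul]; ring_nf]
  rw [h, Real.rpow_one, Real.Gamma_one, mul_one]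

lemma intT2 (σ : ℝ) (hσ : 0 < σ) :
    ∫ t in Ioi (0:ℝ), t ^ 2 * Real.exp (-σ * t) ^ 4 = 2 / (4 * σ) ^ 3 := by
  have h := Real.integral_rpow_mul_exp_neg_mul_Ioi (a := 3) (r := 4 * σ)
    (by norm_num) (by positivity)
  rw [show (∫ t in Ioi (0:ℝ), t ^ 2 * Real.exp (-σ * t) ^ 4)
      = ∫ t in Ioi (0:ℝ), t ^ ((3:ℝ) - 1) * Real.exp (-(4 * σ * t)) from
    setIntegral_congr_fun measurableSet_Ioi fun t _ => by
      rw [show (3:ℝ) - 1 = ((2:ℕ):ℝ) by norm_num, Real.rpow_natCast, ← Real.exp_nat_mul]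
      ring_nf]
  rw [h]
  rw [show Real.Gamma 3 = 2 by
    rw [show (3:ℝ) = (2:ℕ) + 1 by norm_num, Real.Gamma_nat_eq_factorial]; norm_num]
  rw [show ((1:ℝ) / (4 * σ)) ^ (3:ℝ) = (1 / (4 * σ)) ^ (3:ℕ) by
    rw [← Real.rpow_natCast]; norm_num]
  field_simp

/-- Fundamental time-bandwidth limit for single-DOF LTI resonators: for the exponential
velocity envelope `v(t) = e^{−σt}` with `σ > 0`, the energy storage time
`Δt = √2·√(∫₀^∞ t² v⁴ dt / ∫₀^∞ v⁴ dt)` and the bandwidth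
`Δω = 2·√(∫₀^∞ ω²|V(ω)|⁴ dω / ∫₀^∞ |V(ω)|⁴ dω)`, with `V(ω) = ∫₀^∞ v(t) e^{−iωt} dt`,
satisfy `Δt · Δω = 1` independently of `σ`. -/
theorem time_bandwidth_limit_single_dof (σ : ℝ) (hσ : 0 < σ) :
    let v : ℝ → ℝ := fun t => Real.exp (-σ * t)
    let V : ℝ → ℂ := fun ω =>
      ∫ t in Set.Ioi (0 : ℝ), (v t : ℂ) * Complex.exp (-Complex.I * (ω : ℂ) * (t : ℂ))
    let Δt : ℝ := Real.sqrt 2 * Real.sqrt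
        ((∫ t in Set.Ioi (0 : ℝ), t ^ 2 * v t ^ 4) /
         (∫ t in Set.Ioi (0 : ℝ), v t ^ 4))
    let Δω : ℝ := 2 * Real.sqrt
        ((∫ ω in Set.Ioi (0 : ℝ), ω ^ 2 * ‖V ω‖ ^ 4) /
         (∫ ω in Set.Ioi (0 : ℝ), ‖V ω‖ ^ 4))
    Δt * Δω = 1 := by
  intro v V Δt Δω
  have hV : ∀ ω : ℝ, V ω = ((σ : ℂ) + Complex.I * ω)⁻¹ := fun ω => V_val σ ω hσ
  have habs : ∀ ω : ℝ, ‖V ω‖ ^ 4 = ((σ ^ 2 + ω ^ 2) ^ 2)⁻¹ := fun ω => by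
    rw [hV ω]; exact V_abs_pow σ ω hσ
  have hΔt : Δt = 1 / (2 * σ) := by
    show Real.sqrt 2 * Real.sqrt _ = _
    rw [intT2 σ hσ, intT0 σ hσ, ← Real.sqrt_mul (by norm_num : (0:ℝ) ≤ 2)]
    rw [show 2 * ((2 / (4 * σ) ^ 3) / (1 / (4 * σ))) = (1 / (2 * σ)) ^ 2 by
      field_simp; ring]
    exact Real.sqrt_sq (by positivity)
  have hΔω : Δω = 2 * σ := by
    show 2 * Real.sqrt _ = _
    simp only [habs]
    rw [intB σ hσ, intA σ hσ]
    rw [show (π / (4 * σ)) / (π / (4 * σ ^ 3)) = σ ^ 2 by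
      rw [div_div_div_comm, div_self Real.pi_ne_zero]
      field_simp]
    rw [Real.sqrt_sq hσ.le]
  rw [hΔt, hΔω]
  field_simp
end
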